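/- arXiv:1604.07462 — 4 statements merged into one kernel-verified Lean document; each statement's English description precedes it below -/
import Mathlib

section
/- Let N ≥ 3 be an odd integer. Then I_N(R₁,R₂) ≍ (R₁R₂)^{(N²−1)/4} · log(R₁R₂) as R₁R₂ → ∞; that is, there exist constants C₁, C₂ > 0 and T > 1 such that for all R₁, R₂ > 0 with R₁R₂ ≥ T, one has C₁ ≤ I_N(R₁,R₂) / ((R₁R₂)^{(N²−1)/4} log(R₁R₂)) ≤ C₂. -/
/-!
On the ordered region `0 ≤ σ_j² - σ_k² ≤ σ_j²`, so the integrand is at most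
`∏_j σ_j ^ (N - 2j - 2)`, and the integral is at most the product of the one-dimensional integrals
of these powers over `(1/R₂, R₁)`. For `N = 2n + 1` the exponents are `-1` in the middle and pairs
`2i + 1`, `-2i - 3` around it; each pair contributes at most `(R₁R₂)^(2i+2)` and the middle one
`log (R₁R₂)`, which gives `(R₁R₂)^(n² + n) log (R₁R₂)`. For the lower bound, integrate over a box of
dyadic blocks `σ_j ∈ (L_j, 2L_j)` stacked so that `2σ_k ≤ σ_j` for `j < k`, where
`σ_j² - σ_k² ≥ (3/4) σ_j²`; only the middle coordinate gets a long interval, of ratio `R₁R₂ / 4^N`,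
and the same pairing yields a constant times `(R₁R₂)^(n² + n) log (R₁R₂)`.
-/

open MeasureTheory Real

/-- The volume integral `I_N(R₁,R₂)` over ordered tuples `R₁ > σ₁ > ⋯ > σ_N > 1/R₂`
of `∏ σ_l^{-N} ∏_{j<k} (σ_j² - σ_k²)`. -/
noncomputable def volI (N : ℕ) (R₁ R₂ : ℝ) : ℝ :=
  ∫ σ in {σ : Fin N → ℝ | (∀ i, 1 / R₂ < σ i ∧ σ i < R₁) ∧
      ∀ i j : Fin N, i < j → σ j < σ i},
    (∏ l, ((σ l) ^ N)⁻¹) * ∏ j, ∏ k ∈ Finset.Ioi j, ((σ j) ^ 2 - (σ k) ^ 2)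

open Set

noncomputable def volIntegrand (N : ℕ) (σ : Fin N → ℝ) : ℝ :=
  (∏ l, ((σ l) ^ N)⁻¹) * ∏ j, ∏ k ∈ Finset.Ioi j, ((σ j) ^ 2 - (σ k) ^ 2)

def orderedRegion (N : ℕ) (a b : ℝ) : Set (Fin N → ℝ) :=
  {σ | (∀ i, σ i ∈ Ioo a b) ∧ StrictAnti σ}

-- the exponent of `σ_j` in `(σ_j ^ N)⁻¹ * (σ_j ^ 2) ^ (N - 1 - j)`
def vdmExponent (N j : ℕ) : ℤ := N - 2 * j - 2

lemma volI_eq (N : ℕ) (R₁ R₂ : ℝ) :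
    volI N R₁ R₂ = ∫ σ in orderedRegion N (1 / R₂) R₁, volIntegrand N σ := rfl

section Pointwise

variable {N : ℕ} {σ : Fin N → ℝ}

lemma volIntegrand_eq_prod (σ : Fin N → ℝ) :
    volIntegrand N σ = ∏ j, (σ j ^ N)⁻¹ * ∏ k ∈ Finset.Ioi j, (σ j ^ 2 - σ k ^ 2) :=
  Finset.prod_mul_distrib.symm

lemma inv_pow_mul_sq_pow_card_Ioi {x : ℝ} (hx : x ≠ 0) (j : Fin N) :
    (x ^ N)⁻¹ * (x ^ 2) ^ (Finset.Ioi j).card = x ^ vdmExponent N j := by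
  have hj := j.isLt
  rw [Fin.card_Ioi, ← pow_mul, ← zpow_natCast, ← zpow_natCast, ← zpow_neg, ← zpow_add₀ hx,
    vdmExponent]
  congr 1
  push_cast [Nat.sub_sub, Nat.cast_sub (show 1 + (j : ℕ) ≤ N by omega)]
  ring

lemma sq_sub_sq_nonneg_of_strictAnti (hpos : ∀ i, 0 < σ i) (hσ : StrictAnti σ) {j k : Fin N}
    (hjk : j < k) : 0 ≤ σ j ^ 2 - σ k ^ 2 := by
  nlinarith [hpos k, hσ hjk]

lemma volIntegrand_factor_nonneg (hpos : ∀ i, 0 < σ i) (hσ : StrictAnti σ) (j : Fin N) :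
    0 ≤ (σ j ^ N)⁻¹ * ∏ k ∈ Finset.Ioi j, (σ j ^ 2 - σ k ^ 2) :=
  mul_nonneg (inv_nonneg.2 (pow_nonneg (hpos j).le N)) <| Finset.prod_nonneg fun _ hk =>
    sq_sub_sq_nonneg_of_strictAnti hpos hσ (Finset.mem_Ioi.1 hk)

lemma volIntegrand_nonneg (hpos : ∀ i, 0 < σ i) (hσ : StrictAnti σ) : 0 ≤ volIntegrand N σ := by
  rw [volIntegrand_eq_prod]
  exact Finset.prod_nonneg fun j _ => volIntegrand_factor_nonneg hpos hσ j

lemma volIntegrand_le (hpos : ∀ i, 0 < σ i) (hσ : StrictAnti σ) :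
    volIntegrand N σ ≤ ∏ j, σ j ^ vdmExponent N j := by
  rw [volIntegrand_eq_prod]
  refine Finset.prod_le_prod (fun j _ => volIntegrand_factor_nonneg hpos hσ j) fun j _ => ?_
  have hj := hpos j
  rw [← inv_pow_mul_sq_pow_card_Ioi hj.ne', ← Finset.prod_const]
  refine mul_le_mul_of_nonneg_left (Finset.prod_le_prod (fun k hk => ?_) fun k _ => ?_)
    (inv_nonneg.2 (pow_nonneg hj.le N))
  · exact sq_sub_sq_nonneg_of_strictAnti hpos hσ (Finset.mem_Ioi.1 hk)
  · nlinarith [hpos k]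

lemma strictAnti_of_two_mul_le (hpos : ∀ i, 0 < σ i) (hgap : ∀ j k, j < k → 2 * σ k ≤ σ j) :
    StrictAnti σ := fun j k hjk => by linarith [hpos k, hgap j k hjk]

-- each factor `σ_j² - σ_k²` is at least `(3/4) σ_j²`, and there are at most `N²` of them
lemma le_volIntegrand (hpos : ∀ i, 0 < σ i) (hgap : ∀ j k, j < k → 2 * σ k ≤ σ j) :
    (3 / 4) ^ (N ^ 2) * ∏ j, σ j ^ vdmExponent N j ≤ volIntegrand N σ := by
  have hconst : (3 / 4 : ℝ) ^ (N ^ 2) * ∏ j, σ j ^ vdmExponent N j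
      = ∏ j, (3 / 4) ^ N * σ j ^ vdmExponent N j := by
    rw [Finset.prod_mul_distrib, Finset.prod_const, Finset.card_univ, Fintype.card_fin, ← pow_mul,
      sq]
  rw [hconst, volIntegrand_eq_prod]
  refine Finset.prod_le_prod (fun j _ => by have := hpos j; positivity) fun j _ => ?_
  have hj := hpos j
  calc (3 / 4 : ℝ) ^ N * σ j ^ vdmExponent N j
      ≤ (3 / 4) ^ (Finset.Ioi j).card * σ j ^ vdmExponent N j := by
        refine mul_le_mul_of_nonneg_right (pow_le_pow_of_le_one (by norm_num) (by norm_num) ?_)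
          (zpow_pos hj _).le
        exact (Finset.card_le_univ _).trans (Fintype.card_fin N).le
    _ = (σ j ^ N)⁻¹ * ∏ _k ∈ Finset.Ioi j, 3 / 4 * σ j ^ 2 := by
        rw [Finset.prod_const, mul_pow, ← inv_pow_mul_sq_pow_card_Ioi hj.ne']
        ring
    _ ≤ (σ j ^ N)⁻¹ * ∏ k ∈ Finset.Ioi j, (σ j ^ 2 - σ k ^ 2) := by
        gcongr with k hk
        nlinarith [hpos k, hgap j k (Finset.mem_Ioi.1 hk)]

end Pointwise

lemma measurableSet_orderedRegion (N : ℕ) (a b : ℝ) : MeasurableSet (orderedRegion N a b) := by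
  simp only [orderedRegion, StrictAnti, ofPred_and, ofPred_forall]
  measurability

lemma setIntegral_univ_pi_prod {ι : Type*} [Fintype ι] (f : ι → ℝ → ℝ) (s : ι → Set ℝ) :
    ∫ σ in univ.pi s, ∏ i, f i (σ i) = ∏ i, ∫ x in s i, f i x := by
  rw [volume_pi, Measure.restrict_pi_pi, integral_fintype_prod_eq_prod]

section Integrability

variable {N : ℕ}

lemma continuousOn_volIntegrand : ContinuousOn (volIntegrand N) {σ | ∀ i, σ i ≠ 0} := by
  refine ContinuousOn.mul (continuousOn_finsetProd _ fun l _ => ?_)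
    (Continuous.continuousOn (by fun_prop))
  exact ((continuous_apply l).pow N).continuousOn.inv₀ fun σ hσ => pow_ne_zero N (hσ l)

lemma continuousOn_prod_zpow (e : ℕ → ℤ) :
    ContinuousOn (fun σ : Fin N → ℝ => ∏ j, σ j ^ e j) {σ | ∀ i, σ i ≠ 0} :=
  continuousOn_finsetProd _ fun j _ =>
    (continuous_apply j).continuousOn.zpow₀ _ fun _ hσ => Or.inl (hσ j)

lemma MeasureTheory.IntegrableOn.of_subset_pi_Icc {f : (Fin N → ℝ) → ℝ} {a b : ℝ} (ha : 0 < a)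
    (hf : ContinuousOn f {σ | ∀ i, σ i ≠ 0}) {s : Set (Fin N → ℝ)}
    (hs : s ⊆ univ.pi fun _ => Icc a b) : IntegrableOn f s :=
  ((hf.mono fun _ hσ i => (ha.trans_le (hσ i (mem_univ i)).1).ne').integrableOn_compact
    (isCompact_univ_pi fun _ => isCompact_Icc)).mono_set hs

end Integrability

section BoxBounds

variable {N : ℕ} {R₁ R₂ : ℝ}

lemma orderedRegion_subset_pi_Ioo (a b : ℝ) :
    orderedRegion N a b ⊆ univ.pi fun _ => Ioo a b :=
  fun _ hσ i _ => hσ.1 i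

lemma integrableOn_volIntegrand {a b : ℝ} (ha : 0 < a) {s : Set (Fin N → ℝ)}
    (hs : s ⊆ orderedRegion N a b) : IntegrableOn (volIntegrand N) s :=
  .of_subset_pi_Icc ha continuousOn_volIntegrand fun _ hσ i hi =>
    Ioo_subset_Icc_self (orderedRegion_subset_pi_Ioo a b (hs hσ) i hi)

lemma volI_le_prod_integral (hR₂ : 0 < R₂) :
    volI N R₁ R₂ ≤ ∏ j ∈ Finset.range N, ∫ x in Ioo (1 / R₂) R₁, x ^ vdmExponent N j := by
  have ha : 0 < 1 / R₂ := by positivity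
  set G : (Fin N → ℝ) → ℝ := fun σ => ∏ j, σ j ^ vdmExponent N j
  have hG : IntegrableOn G (univ.pi fun _ => Ioo (1 / R₂) R₁) :=
    .of_subset_pi_Icc ha (continuousOn_prod_zpow _) (pi_mono fun _ _ => Ioo_subset_Icc_self)
  have hsub := orderedRegion_subset_pi_Ioo (N := N) (1 / R₂) R₁
  calc volI N R₁ R₂ = ∫ σ in orderedRegion N (1 / R₂) R₁, volIntegrand N σ := volI_eq N R₁ R₂
    _ ≤ ∫ σ in orderedRegion N (1 / R₂) R₁, G σ :=
      setIntegral_mono_on (integrableOn_volIntegrand ha subset_rfl) (hG.mono_set hsub)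
        (measurableSet_orderedRegion N _ _) fun σ hσ =>
          volIntegrand_le (fun i => ha.trans (hσ.1 i).1) hσ.2
    _ ≤ ∫ σ in univ.pi fun _ => Ioo (1 / R₂) R₁, G σ := by
      refine setIntegral_mono_set hG ?_ hsub.eventuallyLE
      refine ae_restrict_of_forall_mem (MeasurableSet.univ_pi fun _ => measurableSet_Ioo)
        fun σ hσ => Finset.prod_nonneg fun j _ => ?_
      exact (zpow_pos (ha.trans (hσ j (mem_univ j)).1) _).le
    _ = ∏ j ∈ Finset.range N, ∫ x in Ioo (1 / R₂) R₁, x ^ vdmExponent N j := by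
      rw [setIntegral_univ_pi_prod (fun (j : Fin N) x => x ^ vdmExponent N j)]
      exact Fin.prod_univ_eq_prod_range (fun j => ∫ x in Ioo (1 / R₂) R₁, x ^ vdmExponent N j) N

lemma prod_integral_le_volI (hR₂ : 0 < R₂) {l u : ℕ → ℝ} (hl : ∀ j < N, 1 / R₂ ≤ l j)
    (hu : ∀ j < N, u j ≤ R₁) (hgap : ∀ j k, j < k → k < N → 2 * u k ≤ l j) :
    (3 / 4) ^ (N ^ 2) * ∏ j ∈ Finset.range N, ∫ x in Ioo (l j) (u j), x ^ vdmExponent N j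
      ≤ volI N R₁ R₂ := by
  have ha : 0 < 1 / R₂ := by positivity
  set B : Set (Fin N → ℝ) := univ.pi fun j => Ioo (l j) (u j)
  have hmem : ∀ σ ∈ B, ∀ j : Fin N, 1 / R₂ < σ j ∧ σ j < R₁ := fun σ hσ j =>
    ⟨(hl j j.isLt).trans_lt (hσ j (mem_univ j)).1, (hσ j (mem_univ j)).2.trans_le (hu j j.isLt)⟩
  have hgapB : ∀ σ ∈ B, ∀ j k : Fin N, j < k → 2 * σ k ≤ σ j := fun σ hσ j k hjk => by
    linarith [(hσ k (mem_univ k)).2, (hσ j (mem_univ j)).1, hgap j k hjk k.isLt]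
  have hBsub : B ⊆ orderedRegion N (1 / R₂) R₁ := fun σ hσ =>
    ⟨hmem σ hσ, strictAnti_of_two_mul_le (fun i => ha.trans (hmem σ hσ i).1) (hgapB σ hσ)⟩
  have hG : IntegrableOn (fun σ : Fin N → ℝ => ∏ j, σ j ^ vdmExponent N j) B :=
    .of_subset_pi_Icc ha (continuousOn_prod_zpow _) fun σ hσ i _ =>
      ⟨(hmem σ hσ i).1.le, (hmem σ hσ i).2.le⟩
  calc (3 / 4) ^ (N ^ 2) * ∏ j ∈ Finset.range N, ∫ x in Ioo (l j) (u j), x ^ vdmExponent N j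
      = ∫ σ in B, (3 / 4) ^ (N ^ 2) * ∏ j, σ j ^ vdmExponent N j := by
        rw [integral_const_mul, setIntegral_univ_pi_prod (fun (j : Fin N) x => x ^ vdmExponent N j),
          Fin.prod_univ_eq_prod_range (fun j => ∫ x in Ioo (l j) (u j), x ^ vdmExponent N j) N]
    _ ≤ ∫ σ in B, volIntegrand N σ :=
      setIntegral_mono_on (hG.const_mul _) (integrableOn_volIntegrand ha hBsub)
        (MeasurableSet.univ_pi fun _ => measurableSet_Ioo) fun σ hσ =>
          le_volIntegrand (fun i => ha.trans (hmem σ hσ i).1) (hgapB σ hσ)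
    _ ≤ volI N R₁ R₂ := by
      refine setIntegral_mono_set (integrableOn_volIntegrand ha subset_rfl) ?_ hBsub.eventuallyLE
      exact ae_restrict_of_forall_mem (measurableSet_orderedRegion N _ _) fun σ hσ =>
        volIntegrand_nonneg (fun i => ha.trans (hσ.1 i).1) hσ.2

end BoxBounds

section OneDimensional

variable {a b : ℝ}

lemma setIntegral_Ioo_eq_intervalIntegral (f : ℝ → ℝ) (hab : a ≤ b) :
    ∫ x in Ioo a b, f x = ∫ x in a..b, f x := by
  rw [intervalIntegral.integral_of_le hab, integral_Ioc_eq_integral_Ioo]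

lemma integral_Ioo_zpow_neg_one (ha : 0 < a) (hab : a ≤ b) :
    ∫ x in Ioo a b, x ^ (-1 : ℤ) = log (b / a) := by
  simp_rw [zpow_neg_one]
  rw [setIntegral_Ioo_eq_intervalIntegral _ hab, integral_inv_of_pos ha (ha.trans_le hab)]

lemma integral_Ioo_zpow_le_of_nonneg (ha : 0 < a) (hab : a ≤ b) {e : ℤ} (he : 0 ≤ e) :
    ∫ x in Ioo a b, x ^ e ≤ b ^ (e + 1) := by
  have he' : (1 : ℝ) ≤ e + 1 := by exact_mod_cast Int.le_add_of_nonneg_left he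
  rw [setIntegral_Ioo_eq_intervalIntegral _ hab, integral_zpow (Or.inl he)]
  calc (b ^ (e + 1) - a ^ (e + 1)) / (e + 1) ≤ b ^ (e + 1) / (e + 1) := by
        gcongr; linarith [zpow_pos ha (e + 1)]
    _ ≤ b ^ (e + 1) := div_le_self (zpow_pos (ha.trans_le hab) _).le he'

lemma integral_Ioo_zpow_le_of_lt_neg_one (ha : 0 < a) (hab : a ≤ b) {e : ℤ} (he : e < -1) :
    ∫ x in Ioo a b, x ^ e ≤ a ^ (e + 1) := by
  have he' : (1 : ℝ) ≤ -(e + 1) := by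
    have : (e : ℝ) ≤ -2 := by exact_mod_cast (show e ≤ -2 by omega)
    linarith
  have h0 : (0 : ℝ) ∉ uIcc a b := by
    rw [uIcc_of_le hab]; exact fun h => h.1.not_gt ha
  rw [setIntegral_Ioo_eq_intervalIntegral _ hab, integral_zpow (Or.inr ⟨by omega, h0⟩),
    ← neg_div_neg_eq, neg_sub]
  calc (a ^ (e + 1) - b ^ (e + 1)) / -(e + 1) ≤ a ^ (e + 1) / -(e + 1) := by
        gcongr; linarith [zpow_pos (ha.trans_le hab) (e + 1)]
    _ ≤ a ^ (e + 1) := div_le_self (zpow_pos ha _).le he'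

end OneDimensional

section Pairs

lemma integral_Ioo_two_mul_zpow {L : ℝ} (hL : 0 < L) (e : ℤ) :
    ∫ x in Ioo L (2 * L), x ^ e = L ^ (e + 1) * ∫ x in Ioo (1 : ℝ) 2, x ^ e := by
  rw [setIntegral_Ioo_eq_intervalIntegral _ (by linarith),
    setIntegral_Ioo_eq_intervalIntegral _ (by norm_num)]
  have hscale := intervalIntegral.integral_comp_mul_left (fun x => x ^ e) hL.ne' (a := 1) (b := 2)
  simp only [mul_zpow, intervalIntegral.integral_const_mul, mul_one, smul_eq_mul] at hscale
  rw [mul_comm 2 L, zpow_add_one₀ hL.ne', mul_comm _ L, mul_assoc, hscale,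
    mul_inv_cancel_left₀ hL.ne']

lemma integral_Ioo_one_two_zpow_pos (e : ℤ) : 0 < ∫ x in Ioo (1 : ℝ) 2, x ^ e := by
  rw [setIntegral_Ioo_eq_intervalIntegral _ (by norm_num)]
  refine intervalIntegral.intervalIntegral_pos_of_pos_on
    (intervalIntegral.intervalIntegrable_zpow (Or.inr (by norm_num [uIcc])))
    (fun x hx => zpow_pos (by linarith [hx.1]) e) (by norm_num)

noncomputable def dyadicPairConst (k : ℕ) : ℝ :=
  (∫ x in Ioo (1 : ℝ) 2, x ^ (k : ℤ)) * ∫ x in Ioo (1 : ℝ) 2, x ^ (-(k : ℤ) - 2)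

lemma dyadicPairConst_pos (k : ℕ) : 0 < dyadicPairConst k :=
  mul_pos (integral_Ioo_one_two_zpow_pos _) (integral_Ioo_one_two_zpow_pos _)

lemma zpow_pair_exponents (k : ℕ) : (k : ℤ) + 1 = ((k + 1 : ℕ) : ℤ) ∧
    -(k : ℤ) - 2 + 1 = -((k + 1 : ℕ) : ℤ) := by
  constructor <;> push_cast <;> ring

variable {a b : ℝ}

lemma integral_Ioo_zpow_mul_integral_Ioo_zpow_le (ha : 0 < a) (hab : a ≤ b) (k : ℕ) :
    (∫ x in Ioo a b, x ^ (k : ℤ)) * ∫ x in Ioo a b, x ^ (-(k : ℤ) - 2) ≤ (b / a) ^ (k + 1) := by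
  obtain ⟨h₁, h₂⟩ := zpow_pair_exponents k
  calc (∫ x in Ioo a b, x ^ (k : ℤ)) * ∫ x in Ioo a b, x ^ (-(k : ℤ) - 2)
      ≤ b ^ ((k : ℤ) + 1) * a ^ (-(k : ℤ) - 2 + 1) :=
        mul_le_mul (integral_Ioo_zpow_le_of_nonneg ha hab (by positivity))
          (integral_Ioo_zpow_le_of_lt_neg_one ha hab (by omega))
          (setIntegral_nonneg measurableSet_Ioo fun x hx => (zpow_pos (ha.trans hx.1) _).le)
          (zpow_pos (ha.trans_le hab) _).le
    _ = (b / a) ^ (k + 1) := by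
        rw [h₁, h₂, zpow_neg, zpow_natCast, zpow_natCast, div_pow, div_eq_mul_inv]

lemma integral_Ioo_two_mul_zpow_mul_integral_Ioo_two_mul_zpow {L L' : ℝ} (hL : 0 < L)
    (hL' : 0 < L') (k : ℕ) :
    (∫ x in Ioo L (2 * L), x ^ (k : ℤ)) * ∫ x in Ioo L' (2 * L'), x ^ (-(k : ℤ) - 2)
      = (L / L') ^ (k + 1) * dyadicPairConst k := by
  obtain ⟨h₁, h₂⟩ := zpow_pair_exponents k
  rw [integral_Ioo_two_mul_zpow hL, integral_Ioo_two_mul_zpow hL', dyadicPairConst, h₁, h₂,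
    zpow_neg, zpow_natCast, zpow_natCast, div_pow, div_eq_mul_inv]
  ring

end Pairs

section Odd

lemma prod_range_two_mul_add_one {M : Type*} [CommMonoid M] (g : ℕ → M) (n : ℕ) :
    ∏ j ∈ Finset.range (2 * n + 1), g j
      = g n * ∏ i ∈ Finset.range n, g (n - 1 - i) * g (n + 1 + i) := by
  rw [show 2 * n + 1 = n + 1 + n by ring, Finset.prod_range_add, Finset.prod_range_succ,
    Finset.prod_mul_distrib, Finset.prod_range_reflect g n]
  ac_rfl

lemma sum_range_two_mul_add_two (n : ℕ) : ∑ i ∈ Finset.range n, (2 * i + 1 + 1) = n ^ 2 + n := by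
  induction n with
  | zero => rfl
  | succ n ih => rw [Finset.sum_range_succ, ih]; ring

lemma vdmExponent_two_mul_add_one_self (n : ℕ) : vdmExponent (2 * n + 1) n = -1 := by
  simp only [vdmExponent]; push_cast; ring

lemma vdmExponent_two_mul_add_one_sub {n i : ℕ} (hi : i < n) :
    vdmExponent (2 * n + 1) (n - 1 - i) = ((2 * i + 1 : ℕ) : ℤ) := by
  simp only [vdmExponent]; push_cast [Nat.sub_sub, Nat.cast_sub (show 1 + i ≤ n by omega)]; ring

lemma vdmExponent_two_mul_add_one_add (n i : ℕ) :
    vdmExponent (2 * n + 1) (n + 1 + i) = -((2 * i + 1 : ℕ) : ℤ) - 2 := by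
  simp only [vdmExponent]; push_cast; ring

variable {n : ℕ} {R₁ R₂ : ℝ}

lemma volI_two_mul_add_one_le (hR₂ : 0 < R₂) (h1 : 1 ≤ R₁ * R₂) :
    volI (2 * n + 1) R₁ R₂ ≤ (R₁ * R₂) ^ (n ^ 2 + n) * log (R₁ * R₂) := by
  have ha : 0 < 1 / R₂ := by positivity
  have hab : 1 / R₂ ≤ R₁ := by rwa [div_le_iff₀ hR₂]
  have hratio : R₁ / (1 / R₂) = R₁ * R₂ := by rw [div_div_eq_mul_div, div_one]
  set J : ℤ → ℝ := fun e => ∫ x in Ioo (1 / R₂) R₁, x ^ e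
  have hJ : ∀ e, 0 ≤ J e := fun e =>
    setIntegral_nonneg measurableSet_Ioo fun x hx => (zpow_pos (ha.trans hx.1) _).le
  calc volI (2 * n + 1) R₁ R₂ ≤ ∏ j ∈ Finset.range (2 * n + 1), J (vdmExponent (2 * n + 1) j) :=
        volI_le_prod_integral hR₂
    _ = J (-1) * ∏ i ∈ Finset.range n,
          J ((2 * i + 1 : ℕ) : ℤ) * J (-((2 * i + 1 : ℕ) : ℤ) - 2) := by
        rw [prod_range_two_mul_add_one, vdmExponent_two_mul_add_one_self]
        refine congrArg _ (Finset.prod_congr rfl fun i hi => ?_)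
        rw [vdmExponent_two_mul_add_one_sub (Finset.mem_range.1 hi),
          vdmExponent_two_mul_add_one_add]
    _ ≤ log (R₁ * R₂) * ∏ i ∈ Finset.range n, (R₁ * R₂) ^ (2 * i + 1 + 1) := by
        rw [← hratio, ← integral_Ioo_zpow_neg_one ha hab]
        exact mul_le_mul_of_nonneg_left (Finset.prod_le_prod (fun i _ => mul_nonneg (hJ _) (hJ _))
          fun i _ => integral_Ioo_zpow_mul_integral_Ioo_zpow_le ha hab _) (hJ _)
    _ = (R₁ * R₂) ^ (n ^ 2 + n) * log (R₁ * R₂) := by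
        rw [Finset.prod_pow_eq_pow_sum, sum_range_two_mul_add_two, mul_comm]

end Odd

lemma two_mul_le_of_two_mul_succ_le {N : ℕ} {l u : ℕ → ℝ} (hl : ∀ j < N, 0 ≤ l j)
    (hlu : ∀ j < N, l j ≤ u j) (hsucc : ∀ j, j + 1 < N → 2 * u (j + 1) ≤ l j) {j k : ℕ}
    (hjk : j < k) (hk : k < N) : 2 * u k ≤ l j := by
  induction k, hjk using Nat.le_induction with
  | base => exact hsucc j hk
  | succ k hjk ih =>
    linarith [ih (by omega), hsucc k hk, hlu k (by omega), hl k (by omega)]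

section OddBox

variable (n : ℕ) (R₁ R₂ : ℝ)

noncomputable def oddBoxLower (j : ℕ) : ℝ :=
  if j < n then R₁ / 4 ^ (j + 1)
  else if j = n then 2 * 4 ^ n / R₂
  else 4 ^ (2 * n + 1 - j) / (2 * R₂)

noncomputable def oddBoxUpper (j : ℕ) : ℝ :=
  if j = n then R₁ / (2 * 4 ^ n) else 2 * oddBoxLower n R₁ R₂ j

variable {n R₁ R₂}

lemma oddBoxLower_sub {i : ℕ} (hi : i < n) :
    oddBoxLower n R₁ R₂ (n - 1 - i) = R₁ / 4 ^ (n - i) := by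
  rw [oddBoxLower, if_pos (by omega), show n - 1 - i + 1 = n - i by omega]

lemma oddBoxLower_add (i : ℕ) : oddBoxLower n R₁ R₂ (n + 1 + i) = 4 ^ (n - i) / (2 * R₂) := by
  rw [oddBoxLower, if_neg (by omega), if_neg (by omega),
    show 2 * n + 1 - (n + 1 + i) = n - i by omega]

lemma oddBoxUpper_of_ne {j : ℕ} (hj : j ≠ n) : oddBoxUpper n R₁ R₂ j = 2 * oddBoxLower n R₁ R₂ j :=
  if_neg hj

lemma two_mul_oddBoxUpper_succ {j : ℕ} (hj : j + 1 < 2 * n + 1) :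
    2 * oddBoxUpper n R₁ R₂ (j + 1) = oddBoxLower n R₁ R₂ j := by
  simp only [oddBoxUpper, oddBoxLower]
  rcases lt_trichotomy (j + 1) n with h | h | h
  · rw [if_neg h.ne, if_pos h, if_pos (by omega), pow_succ 4 (j + 1)]
    ring
  · rw [if_pos h, if_pos (by omega), h]
    ring
  · rw [if_neg h.ne', if_neg (by omega), if_neg (by omega), if_neg (by omega)]
    rcases (show n ≤ j by omega).eq_or_lt with rfl | hjn
    · rw [if_pos rfl, show 2 * n + 1 - (n + 1) = n by omega]
      ring
    · rw [if_neg hjn.ne', show 2 * n + 1 - j = 2 * n + 1 - (j + 1) + 1 by omega,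
        pow_succ]
      ring

lemma oddBoxLower_pos (hR₁ : 0 < R₁) (hR₂ : 0 < R₂) (j : ℕ) : 0 < oddBoxLower n R₁ R₂ j := by
  unfold oddBoxLower; split_ifs <;> positivity

lemma four_pow_le_of_le {m : ℕ} (hm : m ≤ 2 * n + 1) (hT : (4 : ℝ) ^ (2 * n + 1) ≤ R₁ * R₂) :
    (4 : ℝ) ^ m ≤ R₁ * R₂ :=
  (pow_le_pow_right₀ (by norm_num) hm).trans hT

lemma one_div_le_oddBoxLower (hR₂ : 0 < R₂) (hT : (4 : ℝ) ^ (2 * n + 1) ≤ R₁ * R₂) {j : ℕ}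
    (hj : j < 2 * n + 1) : 1 / R₂ ≤ oddBoxLower n R₁ R₂ j := by
  unfold oddBoxLower
  split_ifs with h₁ h₂
  · rw [div_le_div_iff₀ hR₂ (by positivity), one_mul]
    exact four_pow_le_of_le (by omega) hT
  · gcongr
    linarith [one_le_pow₀ (show (1 : ℝ) ≤ 4 by norm_num) (n := n)]
  · rw [div_le_div_iff₀ hR₂ (by positivity), one_mul]
    have : (4 : ℝ) ≤ 4 ^ (2 * n + 1 - j) := le_self_pow₀ (by norm_num) (by omega)
    nlinarith

lemma oddBoxUpper_le (hR₁ : 0 < R₁) (hR₂ : 0 < R₂) (hT : (4 : ℝ) ^ (2 * n + 1) ≤ R₁ * R₂)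
    {j : ℕ} (hj : j < 2 * n + 1) : oddBoxUpper n R₁ R₂ j ≤ R₁ := by
  unfold oddBoxUpper oddBoxLower
  split_ifs with h₁ h₂
  · exact div_le_self hR₁.le (by linarith [one_le_pow₀ (show (1 : ℝ) ≤ 4 by norm_num) (n := n)])
  · have : (4 : ℝ) ≤ 4 ^ (j + 1) := le_self_pow₀ (by norm_num) (by omega)
    rw [mul_div_assoc', div_le_iff₀ (by positivity)]
    nlinarith
  · rw [mul_div_assoc', mul_div_mul_left _ _ two_ne_zero, div_le_iff₀ hR₂]
    exact four_pow_le_of_le (by omega) hT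

lemma oddBoxLower_le_upper (hR₁ : 0 < R₁) (hR₂ : 0 < R₂) (hT : (4 : ℝ) ^ (2 * n + 1) ≤ R₁ * R₂)
    (j : ℕ) : oddBoxLower n R₁ R₂ j ≤ oddBoxUpper n R₁ R₂ j := by
  by_cases hj : j = n
  · subst hj
    rw [oddBoxUpper, if_pos rfl, oddBoxLower, if_neg (lt_irrefl j), if_pos rfl,
      div_le_div_iff₀ hR₂ (by positivity)]
    calc 2 * 4 ^ j * (2 * 4 ^ j) = (4 : ℝ) ^ (2 * j + 1) := by ring
      _ ≤ R₁ * R₂ := hT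
  · rw [oddBoxUpper_of_ne hj]
    linarith [oddBoxLower_pos (n := n) hR₁ hR₂ j]

end OddBox

noncomputable def oddPairConst (n i : ℕ) : ℝ :=
  (2 / (4 ^ (n - i)) ^ 2) ^ (2 * i + 1 + 1) * dyadicPairConst (2 * i + 1)

lemma oddPairConst_pos (n i : ℕ) : 0 < oddPairConst n i :=
  mul_pos (by positivity) (dyadicPairConst_pos _)

section OddBoxIntegrals

variable {n : ℕ} {R₁ R₂ : ℝ}

lemma integral_oddBox_pair (hR₁ : 0 < R₁) (hR₂ : 0 < R₂) {i : ℕ} (hi : i < n) :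
    (∫ x in Ioo (oddBoxLower n R₁ R₂ (n - 1 - i)) (oddBoxUpper n R₁ R₂ (n - 1 - i)),
        x ^ ((2 * i + 1 : ℕ) : ℤ)) *
      ∫ x in Ioo (oddBoxLower n R₁ R₂ (n + 1 + i)) (oddBoxUpper n R₁ R₂ (n + 1 + i)),
        x ^ (-((2 * i + 1 : ℕ) : ℤ) - 2)
      = (R₁ * R₂) ^ (2 * i + 1 + 1) * oddPairConst n i := by
  rw [oddBoxUpper_of_ne (by omega), oddBoxUpper_of_ne (by omega), oddBoxLower_sub hi,
    oddBoxLower_add, integral_Ioo_two_mul_zpow_mul_integral_Ioo_two_mul_zpow (by positivity)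
      (by positivity), oddPairConst, ← mul_assoc, ← mul_pow]
  congr 2
  field_simp

lemma integral_oddBox_middle (hR₁ : 0 < R₁) (hR₂ : 0 < R₂) (hT : (4 : ℝ) ^ (2 * n + 1) ≤ R₁ * R₂) :
    ∫ x in Ioo (oddBoxLower n R₁ R₂ n) (oddBoxUpper n R₁ R₂ n), x ^ (-1 : ℤ)
      = log (R₁ * R₂ / 4 ^ (2 * n + 1)) := by
  rw [integral_Ioo_zpow_neg_one (oddBoxLower_pos hR₁ hR₂ n) (oddBoxLower_le_upper hR₁ hR₂ hT n)]
  simp only [oddBoxLower, oddBoxUpper, lt_irrefl, if_false, if_true]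
  congr 1
  field_simp
  ring

end OddBoxIntegrals

lemma half_log_le_log_div {x c : ℝ} (hc : 0 < c) (hx : c ^ 2 ≤ x) : log x / 2 ≤ log (x / c) := by
  have hlog := log_le_log (by positivity) hx
  rw [log_pow] at hlog
  have hx0 : 0 < x := (pow_pos hc 2).trans_le hx
  rw [log_div hx0.ne' hc.ne']
  push_cast at hlog
  linarith

theorem exists_mul_le_volI_two_mul_add_one (n : ℕ) : ∃ c > 0, ∀ R₁ R₂ : ℝ, 0 < R₁ → 0 < R₂ →
    ((4 : ℝ) ^ (2 * n + 1)) ^ 2 ≤ R₁ * R₂ →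
      c * ((R₁ * R₂) ^ (n ^ 2 + n) * log (R₁ * R₂)) ≤ volI (2 * n + 1) R₁ R₂ := by
  have hc := Finset.prod_pos fun i (_ : i ∈ Finset.range n) => oddPairConst_pos n i
  refine ⟨(3 / 4) ^ ((2 * n + 1) ^ 2) * (∏ i ∈ Finset.range n, oddPairConst n i) / 2,
    by positivity, fun R₁ R₂ hR₁ hR₂ hT => ?_⟩
  have hT' : (4 : ℝ) ^ (2 * n + 1) ≤ R₁ * R₂ :=
    (le_self_pow₀ (one_le_pow₀ (by norm_num)) two_ne_zero).trans hT
  have hbox := prod_integral_le_volI hR₂ (l := oddBoxLower n R₁ R₂) (u := oddBoxUpper n R₁ R₂)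
    (fun j hj => one_div_le_oddBoxLower hR₂ hT' hj) (fun j hj => oddBoxUpper_le hR₁ hR₂ hT' hj)
    (fun j k hjk hk => two_mul_le_of_two_mul_succ_le
      (fun j _ => (oddBoxLower_pos hR₁ hR₂ j).le) (fun j _ => oddBoxLower_le_upper hR₁ hR₂ hT' j)
      (fun j hj => (two_mul_oddBoxUpper_succ hj).le) hjk hk)
  rw [prod_range_two_mul_add_one, vdmExponent_two_mul_add_one_self,
    integral_oddBox_middle hR₁ hR₂ hT', Finset.prod_congr rfl fun i hi => by
      rw [vdmExponent_two_mul_add_one_sub (Finset.mem_range.1 hi), vdmExponent_two_mul_add_one_add,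
        integral_oddBox_pair hR₁ hR₂ (Finset.mem_range.1 hi)],
    Finset.prod_mul_distrib, Finset.prod_pow_eq_pow_sum, sum_range_two_mul_add_two] at hbox
  refine le_trans ?_ hbox
  have hlog := half_log_le_log_div (by positivity) hT
  calc (3 / 4) ^ ((2 * n + 1) ^ 2) * (∏ i ∈ Finset.range n, oddPairConst n i) / 2 *
        ((R₁ * R₂) ^ (n ^ 2 + n) * log (R₁ * R₂))
      = (3 / 4) ^ ((2 * n + 1) ^ 2) * (log (R₁ * R₂) / 2 *
          ((R₁ * R₂) ^ (n ^ 2 + n) * ∏ i ∈ Finset.range n, oddPairConst n i)) := by ring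
    _ ≤ _ := by gcongr

theorem stmt0_general (N : ℕ) (hodd : Odd N) :
    ∃ C₁ C₂ T : ℝ, 0 < C₁ ∧ 0 < C₂ ∧ 1 < T ∧
      ∀ R₁ R₂ : ℝ, 0 < R₁ → 0 < R₂ → T ≤ R₁ * R₂ →
        C₁ ≤ volI N R₁ R₂ /
            ((R₁ * R₂) ^ (((N : ℝ) ^ 2 - 1) / 4) * Real.log (R₁ * R₂)) ∧
        volI N R₁ R₂ /
            ((R₁ * R₂) ^ (((N : ℝ) ^ 2 - 1) / 4) * Real.log (R₁ * R₂)) ≤ C₂ := by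
  obtain ⟨n, rfl⟩ := hodd
  obtain ⟨c, hc, hlower⟩ := exists_mul_le_volI_two_mul_add_one n
  have hT : (1 : ℝ) < ((4 : ℝ) ^ (2 * n + 1)) ^ 2 :=
    one_lt_pow₀ (one_lt_pow₀ (by norm_num) (by omega)) two_ne_zero
  refine ⟨c, 1, _, hc, one_pos, hT, fun R₁ R₂ hR₁ hR₂ hR => ?_⟩
  have h1 : 1 < R₁ * R₂ := hT.trans_le hR
  have hexp : (R₁ * R₂) ^ ((((2 * n + 1 : ℕ) : ℝ) ^ 2 - 1) / 4) = (R₁ * R₂) ^ (n ^ 2 + n) := by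
    rw [← rpow_natCast (R₁ * R₂) (n ^ 2 + n)]
    congr 1
    push_cast
    ring
  have hD : 0 < (R₁ * R₂) ^ (n ^ 2 + n) * log (R₁ * R₂) :=
    mul_pos (pow_pos (by positivity) _) (log_pos h1)
  rw [hexp, le_div_iff₀ hD, div_le_iff₀ hD, one_mul]
  exact ⟨hlower R₁ R₂ hR₁ hR₂ hR, volI_two_mul_add_one_le hR₂ h1.le⟩

theorem stmt0 (N : ℕ) (hN : 3 ≤ N) (hodd : Odd N) :
    ∃ C₁ C₂ T : ℝ, 0 < C₁ ∧ 0 < C₂ ∧ 1 < T ∧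
      ∀ R₁ R₂ : ℝ, 0 < R₁ → 0 < R₂ → T ≤ R₁ * R₂ →
        C₁ ≤ volI N R₁ R₂ /
            ((R₁ * R₂) ^ (((N : ℝ) ^ 2 - 1) / 4) * Real.log (R₁ * R₂)) ∧
        volI N R₁ R₂ /
            ((R₁ * R₂) ^ (((N : ℝ) ^ 2 - 1) / 4) * Real.log (R₁ * R₂)) ≤ C₂ :=
  stmt0_general N hodd
end

section
/- One has I_3(R₁,R₂) ∼ (R₁R₂)² log(R₁R₂) / 4 as R₁R₂ → ∞; that is, for every ε > 0 there exists T > 1 such that for all R₁, R₂ > 0 with R₁R₂ ≥ T, |4 · I_3(R₁,R₂) / ((R₁R₂)² log(R₁R₂)) − 1| < ε. -/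
/-!
After Fubini the integral over the ordered simplex `1/R₂ < σ₃ < σ₂ < σ₁ < R₁` becomes an iterated
integral of `(x² - y²)(x² - z²)(y² - z²) / (xyz)³`, which three applications of the fundamental
theorem of calculus evaluate in closed form. With `ρ = R₁R₂`,
`I₃(R₁, R₂) = (ρ² (log ρ - 2) - ρ⁻² (log ρ + 2)) / 4 + (log ρ)² + 1`,
whose leading term is `ρ² log ρ / 4`.
-/

open MeasureTheory Real

open Set Filter Topology

theorem integral_Ioo_eq_sub_of_hasDerivAt {F f : ℝ → ℝ} {a b : ℝ} (hab : a ≤ b)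
    (hF : ∀ t ∈ Icc a b, HasDerivAt F (f t) t) (hf : ContinuousOn f (Icc a b)) :
    ∫ t in Ioo a b, f t = F b - F a := by
  rw [← integral_Ioc_eq_integral_Ioo, ← intervalIntegral.integral_of_le hab]
  exact intervalIntegral.integral_eq_sub_of_hasDerivAt (by rwa [uIcc_of_le hab])
    (hf.intervalIntegrable_of_Icc hab)

theorem setIntegral_prod_fiberwise {α β E : Type*} [MeasurableSpace α] [MeasurableSpace β]
    [NormedAddCommGroup E] [NormedSpace ℝ E] {μ : Measure α} {ν : Measure β}
    [SFinite μ] [SFinite ν]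
    {U : Set α} {V : α → Set β} (hU : MeasurableSet U)
    (hS : MeasurableSet {p : α × β | p.1 ∈ U ∧ p.2 ∈ V p.1}) {g : α × β → E}
    (hg : IntegrableOn g {p | p.1 ∈ U ∧ p.2 ∈ V p.1} (μ.prod ν)) :
    ∫ p in {p | p.1 ∈ U ∧ p.2 ∈ V p.1}, g p ∂μ.prod ν = ∫ x in U, ∫ y in V x, g (x, y) ∂ν ∂μ := by
  rw [← integral_indicator hS, integral_prod _ ((integrable_indicator_iff hS).2 hg),
    ← integral_indicator hU]
  congr 1 with x
  by_cases hx : x ∈ U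
  · have hV : MeasurableSet (V x) := by
      simpa [hx] using measurable_prodMk_left (x := x) hS
    rw [indicator_of_mem hx, ← integral_indicator hV]
    congr 1 with y
    by_cases hy : y ∈ V x <;> simp [hx, hy]
  · simp [hx]

def MeasurableEquiv.finThreeArrow (α : Type*) [MeasurableSpace α] : (Fin 3 → α) ≃ᵐ α × α × α :=
  (MeasurableEquiv.piFinSuccAbove (fun _ ↦ α) 0).trans
    ((MeasurableEquiv.refl α).prodCongr MeasurableEquiv.finTwoArrow)

theorem MeasurableEquiv.finThreeArrow_symm_apply {α : Type*} [MeasurableSpace α]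
    (p : α × α × α) :
    (MeasurableEquiv.finThreeArrow α).symm p = ![p.1, p.2.1, p.2.2] := by
  ext i; fin_cases i <;> rfl

theorem volume_preserving_finThreeArrow (α : Type*) [MeasureSpace α]
    [SigmaFinite (volume : Measure α)] :
    MeasurePreserving (MeasurableEquiv.finThreeArrow α) :=
  ((MeasurePreserving.id volume).prod (volume_preserving_finTwoArrow α)).comp
    (volume_preserving_piFinSuccAbove (fun _ ↦ α) 0)

theorem preimage_finThreeArrow_symm_strictAnti (a b : ℝ) :
    (MeasurableEquiv.finThreeArrow ℝ).symm ⁻¹'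
        {σ : Fin 3 → ℝ | (∀ i, a < σ i ∧ σ i < b) ∧ ∀ i j, i < j → σ j < σ i} =
      {p : ℝ × ℝ × ℝ | p.1 ∈ Ioo a b ∧ p.2 ∈ {q : ℝ × ℝ | q.1 ∈ Ioo a p.1 ∧ q.2 ∈ Ioo a q.1}} := by
  ext ⟨x, y, z⟩
  simp only [Fin.forall_fin_succ, Fin.isValue, Fin.succ_zero_eq_one, Fin.succ_one_eq_two,
    IsEmpty.forall_iff, and_true, not_lt_zero, Fin.lt_one_iff, Nat.reduceAdd, true_and,
    forall_const, Fin.reduceLT, Fin.succ_ne_zero, lt_self_iff_false, and_self,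
    preimage_ofPred_eq, MeasurableEquiv.finThreeArrow_symm_apply, Nat.succ_eq_add_one,
    Matrix.cons_val_zero, Matrix.cons_val_one, Matrix.cons_val, mem_ofPred_eq, mem_Ioo]
  grind

theorem setIntegral_fin_three_strictAnti {E : Type*} [NormedAddCommGroup E] [NormedSpace ℝ E]
    {g : ℝ → ℝ → ℝ → E} {a b : ℝ}
    (hg : ContinuousOn (fun p : ℝ × ℝ × ℝ ↦ g p.1 p.2.1 p.2.2) (Icc a b ×ˢ Icc a b ×ˢ Icc a b)) :
    ∫ σ in {σ : Fin 3 → ℝ | (∀ i, a < σ i ∧ σ i < b) ∧ ∀ i j, i < j → σ j < σ i},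
        g (σ 0) (σ 1) (σ 2) =
      ∫ x in Ioo a b, ∫ y in Ioo a x, ∫ z in Ioo a y, g x y z := by
  set e := MeasurableEquiv.finThreeArrow ℝ
  have hfiber : ∀ x, MeasurableSet {q : ℝ × ℝ | q.1 ∈ Ioo a x ∧ q.2 ∈ Ioo a q.1} := fun x ↦ by
    simp only [mem_Ioo]; measurability
  have hregion : MeasurableSet {p : ℝ × ℝ × ℝ |
      p.1 ∈ Ioo a b ∧ p.2 ∈ {q : ℝ × ℝ | q.1 ∈ Ioo a p.1 ∧ q.2 ∈ Ioo a q.1}} := by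
    simp only [mem_Ioo, mem_ofPred_eq]; measurability
  have hK : IsCompact (Icc a b ×ˢ Icc a b) := isCompact_Icc.prod isCompact_Icc
  rw [← ((volume_preserving_finThreeArrow ℝ).symm e).setIntegral_preimage_emb
    e.symm.measurableEmbedding, preimage_finThreeArrow_symm_strictAnti]
  simp only [e, MeasurableEquiv.finThreeArrow_symm_apply, Matrix.cons_val_zero,
    Matrix.cons_val_one, Matrix.cons_val_two, Matrix.head_cons, Matrix.tail_cons]
  rw [Measure.volume_eq_prod, setIntegral_prod_fiberwise
    (V := fun x ↦ {q : ℝ × ℝ | q.1 ∈ Ioo a x ∧ q.2 ∈ Ioo a q.1}) measurableSet_Ioo hregion]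
  · refine setIntegral_congr_fun measurableSet_Ioo fun x hx ↦ ?_
    rw [Measure.volume_eq_prod]
    refine setIntegral_prod_fiberwise (V := fun y ↦ Ioo a y) measurableSet_Ioo (hfiber x) ?_
    have hgx : ContinuousOn (fun q : ℝ × ℝ ↦ g x q.1 q.2) (Icc a b ×ˢ Icc a b) :=
      hg.comp (Continuous.prodMk_right x).continuousOn fun q hq ↦ ⟨Ioo_subset_Icc_self hx, hq⟩
    refine (hgx.integrableOn_compact hK).mono_set ?_
    rintro ⟨y, z⟩ ⟨⟨hy, hyx⟩, hz, hzy⟩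
    exact ⟨⟨hy.le, (hyx.trans hx.2).le⟩, hz.le, (hzy.trans (hyx.trans hx.2)).le⟩
  · refine (hg.integrableOn_compact (isCompact_Icc.prod hK)).mono_set ?_
    rintro ⟨x, y, z⟩ ⟨⟨hx, hxb⟩, ⟨hy, hyx⟩, hz, hzy⟩
    exact ⟨⟨hx.le, hxb.le⟩, ⟨hy.le, (hyx.trans hxb).le⟩, hz.le,
      (hzy.trans (hyx.trans hxb)).le⟩

namespace VolIThree

noncomputable def integrand (x y z : ℝ) : ℝ :=
  (x ^ 2 - y ^ 2) * (x ^ 2 - z ^ 2) * (y ^ 2 - z ^ 2) / (x * y * z) ^ 3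

noncomputable def innerPrimitive (x y z : ℝ) : ℝ :=
  (x ^ 2 - y ^ 2) / (x * y) ^ 3 *
    (z ^ 2 / 2 - x ^ 2 * y ^ 2 / (2 * z ^ 2) - (x ^ 2 + y ^ 2) * log z)

noncomputable def middlePrimitive (x a y : ℝ) : ℝ :=
  ((y ^ 2 * (log y - log a - 1) + x ^ 4 * (log y - log a + 1) / y ^ 2) / 2
    + x ^ 2 / 4 * (a ^ 2 / y ^ 2 - y ^ 2 / a ^ 2)
    + (a ^ 2 + x ^ 2) ^ 2 / (2 * a ^ 2) * (log y - log a)) / x ^ 3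

noncomputable def outerPrimitive (a x : ℝ) : ℝ :=
  (log x - log a) ^ 2
    + (x ^ 2 * (log x - log a - 2) / a ^ 2 - a ^ 2 * (log x - log a + 2) / x ^ 2) / 4

noncomputable def closedForm (t : ℝ) : ℝ :=
  log t ^ 2 + (t ^ 2 * (log t - 2) - (log t + 2) / t ^ 2) / 4 + 1

theorem hasDerivAt_innerPrimitive {x y z : ℝ} (hx : x ≠ 0) (hy : y ≠ 0) (hz : z ≠ 0) :
    HasDerivAt (innerPrimitive x y) (integrand x y z) z := by
  have hsq := hasDerivAt_pow 2 z
  have h₁ := hsq.div_const 2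
  have h₂ := (hasDerivAt_const z (x ^ 2 * y ^ 2)).div (hsq.const_mul 2) (by positivity)
  have h₃ := (hasDerivAt_log hz).const_mul (x ^ 2 + y ^ 2)
  exact (((h₁.sub h₂).sub h₃).const_mul _).congr_deriv
    (by unfold integrand; field_simp; ring)

theorem hasDerivAt_middlePrimitive {x a y : ℝ} (hx : x ≠ 0) (ha : a ≠ 0) (hy : y ≠ 0) :
    HasDerivAt (middlePrimitive x a) (innerPrimitive x y y - innerPrimitive x y a) y := by
  have hsq := hasDerivAt_pow 2 y
  have hw := (hasDerivAt_log hy).sub_const (log a)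
  have h₁ := hsq.mul (hw.sub_const 1)
  have h₂ := ((hw.add_const 1).const_mul (x ^ 4)).div hsq (by positivity)
  have h₃ := ((hasDerivAt_const y (a ^ 2)).div hsq (by positivity)).sub (hsq.div_const (a ^ 2))
  have h₄ := hw.const_mul ((a ^ 2 + x ^ 2) ^ 2 / (2 * a ^ 2))
  have h := (((h₁.add h₂).div_const 2).add (h₃.const_mul (x ^ 2 / 4))).add h₄
  exact (h.div_const _).congr_deriv (by unfold innerPrimitive; field_simp; ring)

theorem hasDerivAt_outerPrimitive {a x : ℝ} (ha : a ≠ 0) (hx : x ≠ 0) :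
    HasDerivAt (outerPrimitive a) (middlePrimitive x a x - middlePrimitive x a a) x := by
  have hsq := hasDerivAt_pow 2 x
  have hu := (hasDerivAt_log hx).sub_const (log a)
  have h₁ := (hsq.mul (hu.sub_const 2)).div_const (a ^ 2)
  have h₂ := ((hu.add_const 2).const_mul (a ^ 2)).div hsq (by positivity)
  exact ((hu.pow 2).add ((h₁.sub h₂).div_const 4)).congr_deriv
    (by unfold middlePrimitive; field_simp; ring)

theorem outerPrimitive_sub {a b : ℝ} (ha : a ≠ 0) (hb : b ≠ 0) :
    outerPrimitive a b - outerPrimitive a a = closedForm (b / a) := by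
  unfold outerPrimitive closedForm
  rw [log_div hb ha]
  field_simp
  ring

theorem continuousOn_integrand {a b : ℝ} (ha : 0 < a) :
    ContinuousOn (fun p : ℝ × ℝ × ℝ ↦ integrand p.1 p.2.1 p.2.2)
      (Icc a b ×ˢ Icc a b ×ˢ Icc a b) := by
  refine continuousOn_of_forall_continuousAt fun ⟨x, y, z⟩ ⟨hx, hy, hz⟩ ↦ ?_
  have := ha.trans_le hx.1
  have := ha.trans_le hy.1
  have := ha.trans_le hz.1
  unfold integrand
  fun_prop (disch := positivity)

theorem integral_integrand {a x y : ℝ} (ha : 0 < a) (hay : a ≤ y) (hx : x ≠ 0) :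
    ∫ z in Ioo a y, integrand x y z = innerPrimitive x y y - innerPrimitive x y a := by
  have hy : y ≠ 0 := (ha.trans_le hay).ne'
  refine integral_Ioo_eq_sub_of_hasDerivAt hay
    (fun z hz ↦ hasDerivAt_innerPrimitive hx hy (ha.trans_le hz.1).ne') ?_
  refine continuousOn_of_forall_continuousAt fun z hz ↦ ?_
  have := ha.trans_le hz.1
  unfold integrand
  fun_prop (disch := positivity)

theorem integral_integral_integrand {a x : ℝ} (ha : 0 < a) (hax : a ≤ x) :
    ∫ y in Ioo a x, ∫ z in Ioo a y, integrand x y z =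
      middlePrimitive x a x - middlePrimitive x a a := by
  have hx : x ≠ 0 := (ha.trans_le hax).ne'
  rw [setIntegral_congr_fun measurableSet_Ioo fun y hy ↦ integral_integrand ha hy.1.le hx]
  refine integral_Ioo_eq_sub_of_hasDerivAt hax
    (fun y hy ↦ hasDerivAt_middlePrimitive hx ha.ne' (ha.trans_le hy.1).ne') ?_
  refine continuousOn_of_forall_continuousAt fun y hy ↦ ?_
  have := ha.trans_le hy.1
  unfold innerPrimitive
  fun_prop (disch := positivity)

theorem integral_integral_integral_integrand {a b : ℝ} (ha : 0 < a) (hab : a ≤ b) :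
    ∫ x in Ioo a b, ∫ y in Ioo a x, ∫ z in Ioo a y, integrand x y z = closedForm (b / a) := by
  rw [setIntegral_congr_fun measurableSet_Ioo fun x hx ↦ integral_integral_integrand ha hx.1.le,
    ← outerPrimitive_sub ha.ne' (ha.trans_le hab).ne']
  refine integral_Ioo_eq_sub_of_hasDerivAt hab
    (fun x hx ↦ hasDerivAt_outerPrimitive ha.ne' (ha.trans_le hx.1).ne') ?_
  refine continuousOn_of_forall_continuousAt fun x hx ↦ ?_
  have := ha.trans_le hx.1
  unfold middlePrimitive
  fun_prop (disch := positivity)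

theorem tendsto_closedForm :
    Tendsto (fun t ↦ 4 * closedForm t / (t ^ 2 * log t)) atTop (𝓝 1) := by
  have hinv : Tendsto (fun t : ℝ ↦ t⁻¹) atTop (𝓝 0) := tendsto_inv_atTop_zero
  have hlog : Tendsto (fun t : ℝ ↦ (log t)⁻¹) atTop (𝓝 0) :=
    tendsto_log_atTop.inv_tendsto_atTop
  have hlog_div : Tendsto (fun t : ℝ ↦ log t / t) atTop (𝓝 0) :=
    isLittleO_log_id_atTop.tendsto_div_nhds_zero
  have h := ((((tendsto_const_nhds (x := (1 : ℝ))).add ((hlog_div.mul hinv).const_mul 4)).sub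
    (hlog.const_mul 2)).sub (hinv.pow 4)).sub ((((hinv.pow 4).mul hlog).const_mul 2).sub
    (((hinv.pow 2).mul hlog).const_mul 4))
  norm_num at h
  refine h.congr' ?_
  filter_upwards [eventually_gt_atTop 1] with t ht
  have := log_pos ht
  unfold closedForm
  field_simp
  ring

end VolIThree

open VolIThree in
theorem volI_three_eq_closedForm {R₁ R₂ : ℝ} (h₂ : 0 < R₂) (h : 1 ≤ R₁ * R₂) :
    volI 3 R₁ R₂ = closedForm (R₁ * R₂) := by
  have hprod : ∀ σ : Fin 3 → ℝ,
      (∏ l, (σ l ^ 3)⁻¹) * ∏ j, ∏ k ∈ Finset.Ioi j, (σ j ^ 2 - σ k ^ 2) =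
        integrand (σ 0) (σ 1) (σ 2) := fun σ ↦ by
    simp only [Fin.prod_univ_succ, Fin.prod_univ_zero, Fin.prod_Ioi_zero, Fin.prod_Ioi_succ]
    simp only [Fin.succ_zero_eq_one, Fin.succ_one_eq_two, mul_one, integrand]
    ring
  have ha : 0 < 1 / R₂ := by positivity
  have hab : 1 / R₂ ≤ R₁ := by rwa [div_le_iff₀ h₂]
  simp only [volI, hprod]
  rw [setIntegral_fin_three_strictAnti (continuousOn_integrand ha),
    integral_integral_integral_integrand ha hab, div_div_eq_mul_div, div_one]

theorem stmt3 :
    ∀ ε : ℝ, 0 < ε → ∃ T : ℝ, 1 < T ∧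
      ∀ R₁ R₂ : ℝ, 0 < R₁ → 0 < R₂ → T ≤ R₁ * R₂ →
        |4 * volI 3 R₁ R₂ / ((R₁ * R₂) ^ 2 * Real.log (R₁ * R₂)) - 1| < ε := by
  intro ε hε
  obtain ⟨T, hT⟩ := Metric.tendsto_atTop.1 VolIThree.tendsto_closedForm ε hε
  refine ⟨max T 2, by simp, fun R₁ R₂ _ h₂ hR ↦ ?_⟩
  rw [volI_three_eq_closedForm h₂ (by linarith [le_max_right T 2]), ← Real.dist_eq]
  exact hT _ (le_of_max_le_left hR)
end

section
/- For every real R > 1, J_3(R) = (1/24)(R⁶ − R^{−6}) − (1/3)(R³ − R^{−3}) + (3/2) log R, where J_3(R) := ∫∫_{D(R)} (σ₁σ₂)^{−1} (σ₁² − σ₂²)(σ₁² − σ₃²)(σ₂² − σ₃²) dσ₁ dσ₂ with σ₃ := (σ₁σ₂)^{−1} and D(R) = {(σ₁,σ₂) ∈ (0,∞)² : R > σ₁ > σ₂ > (σ₁σ₂)^{−1}}. -/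
open MeasureTheory Real

theorem stmt6 (R : ℝ) (hR : 1 < R) :
    (∫ p in {p : ℝ × ℝ | 0 < p.1 ∧ 0 < p.2 ∧ p.2 < p.1 ∧ p.1 < R ∧ (p.1 * p.2)⁻¹ < p.2},
        (p.1 * p.2)⁻¹ * ((p.1 ^ 2 - p.2 ^ 2) * (p.1 ^ 2 - ((p.1 * p.2)⁻¹) ^ 2) *
          (p.2 ^ 2 - ((p.1 * p.2)⁻¹) ^ 2))) =
      (1 / 24) * (R ^ 6 - (R ^ 6)⁻¹) - (1 / 3) * (R ^ 3 - (R ^ 3)⁻¹) +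
        (3 / 2) * Real.log R := by
  have hR0 : (0:ℝ) < R := lt_trans one_pos hR
  set f : ℝ × ℝ → ℝ := fun p => (p.1 * p.2)⁻¹ * ((p.1 ^ 2 - p.2 ^ 2) *
      (p.1 ^ 2 - ((p.1 * p.2)⁻¹) ^ 2) * (p.2 ^ 2 - ((p.1 * p.2)⁻¹) ^ 2)) with hfdef
  set S : Set (ℝ × ℝ) :=
    {p : ℝ × ℝ | 0 < p.1 ∧ 0 < p.2 ∧ p.2 < p.1 ∧ p.1 < R ∧ (p.1 * p.2)⁻¹ < p.2} with hSdef
  -- membership characterization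
  have hmem : ∀ p : ℝ × ℝ, p ∈ S ↔
      (p.1 ∈ Set.Ioo 1 R ∧ p.2 ∈ Set.Ioo (Real.sqrt p.1)⁻¹ p.1) := by
    rintro ⟨x, y⟩
    simp only [hSdef, Set.mem_setOf_eq, Set.mem_Ioo]
    constructor
    · rintro ⟨hx0, hy0, hyx, hxR, hinv⟩
      have hxy : 0 < x * y := mul_pos hx0 hy0
      have h1 : 1 < y * (x * y) := (inv_lt_iff_one_lt_mul₀ hxy).1 hinv
      have hx1 : 1 < x := by nlinarith
      have hsx : (Real.sqrt x)⁻¹ < y := by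
        rw [← Real.sqrt_inv]
        exact (Real.sqrt_lt' hy0).2 (by rw [inv_lt_iff_one_lt_mul₀ hx0]; nlinarith)
      exact ⟨⟨hx1, hxR⟩, hsx, hyx⟩
    · rintro ⟨⟨hx1, hxR⟩, hay, hyx⟩
      have hx0 : 0 < x := lt_trans one_pos hx1
      have hy0 : 0 < y := lt_trans (by positivity) hay
      have h2 : x⁻¹ < y ^ 2 := by
        have := (Real.sqrt_lt' hy0).1 (by rwa [Real.sqrt_inv])
        exact this
      refine ⟨hx0, hy0, hyx, hxR, ?_⟩
      rw [inv_lt_iff_one_lt_mul₀ (mul_pos hx0 hy0)]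
      rw [inv_lt_iff_one_lt_mul₀ hx0] at h2
      nlinarith
  -- measurability of S
  have hSm : MeasurableSet S := by
    simp only [hSdef, Set.setOf_and]
    refine (MeasurableSet.inter ?_ (MeasurableSet.inter ?_ (MeasurableSet.inter ?_
      (MeasurableSet.inter ?_ ?_))))
    · exact measurableSet_lt measurable_const measurable_fst
    · exact measurableSet_lt measurable_const measurable_snd
    · exact measurableSet_lt measurable_snd measurable_fst
    · exact measurableSet_lt measurable_fst measurable_const
    · exact measurableSet_lt ((measurable_fst.mul measurable_snd).inv) measurable_snd
  -- integrability of f on S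
  have hInt : IntegrableOn f S := by
    set K : Set (ℝ × ℝ) := Set.Icc 1 R ×ˢ Set.Icc (Real.sqrt R)⁻¹ R with hKdef
    have hKc : IsCompact K := isCompact_Icc.prod isCompact_Icc
    have hne : ∀ p ∈ K, p.1 * p.2 ≠ 0 := by
      rintro ⟨x, y⟩ ⟨⟨hx1, _⟩, ⟨hy1, _⟩⟩
      have : (0:ℝ) < (Real.sqrt R)⁻¹ := by positivity
      have hy0 : 0 < y := lt_of_lt_of_le this hy1
      have hx0 : 0 < x := lt_of_lt_of_le one_pos hx1
      positivity
    have hg : ContinuousOn (fun p : ℝ × ℝ => (p.1 * p.2)⁻¹) K :=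
      (continuous_fst.mul continuous_snd).continuousOn.inv₀ hne
    have hfc : ContinuousOn f K := by
      refine hg.mul (ContinuousOn.mul (ContinuousOn.mul ?_ ?_) ?_)
      · exact ((continuous_fst.pow 2).sub (continuous_snd.pow 2)).continuousOn
      · exact (continuous_fst.pow 2).continuousOn.sub (hg.pow 2)
      · exact (continuous_snd.pow 2).continuousOn.sub (hg.pow 2)
    have hsub : S ⊆ K := by
      rintro ⟨x, y⟩ hp
      obtain ⟨⟨hx1, hxR⟩, hay, hyx⟩ := (hmem _).1 hp
      have hx0 : 0 < x := lt_trans one_pos hx1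
      have hy0 : 0 < y := lt_trans (by positivity) hay
      refine ⟨⟨hx1.le, hxR.le⟩, ?_, (lt_trans hyx hxR).le⟩
      have hsx : Real.sqrt x ≤ Real.sqrt R := Real.sqrt_le_sqrt hxR.le
      have hsx0 : 0 < Real.sqrt x := Real.sqrt_pos.2 hx0
      have : (Real.sqrt R)⁻¹ ≤ (Real.sqrt x)⁻¹ := by
        apply inv_anti₀ hsx0 hsx
      exact le_of_lt (lt_of_le_of_lt this hay)
    exact (hfc.integrableOn_compact hKc).mono_set hsub
  -- the explicit slice integral
  have hFval : ∀ x ∈ Set.Ioo (1:ℝ) R,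
      (∫ y in Set.Ioo (Real.sqrt x)⁻¹ x, f (x, y)) =
        x ^ 5 / 4 - x ^ 2 + 3 / 2 * x⁻¹ - (x ^ 4)⁻¹ + (x ^ 7)⁻¹ / 4 := by
    rintro x ⟨hx1, hxR⟩
    have hx0 : 0 < x := lt_trans one_pos hx1
    have hsx0 : 0 < Real.sqrt x := Real.sqrt_pos.2 hx0
    have hsx1 : 1 < Real.sqrt x := by
      rw [show (1:ℝ) = Real.sqrt 1 by simp]
      exact Real.sqrt_lt_sqrt one_pos.le hx1
    have hax : (Real.sqrt x)⁻¹ < x := lt_trans (inv_lt_one_of_one_lt₀ hsx1) hx1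
    have ha0 : 0 < (Real.sqrt x)⁻¹ := by positivity
    set a := (Real.sqrt x)⁻¹ with hadef
    have ha2 : a ^ 2 = x⁻¹ := by
      rw [hadef, inv_pow, Real.sq_sqrt hx0.le]
    set G : ℝ → ℝ := fun y => x ^ 3 / 2 * y ^ 2 - x / 4 * y ^ 4 + x / 2 * (y ^ 2)⁻¹
        + (x ^ 3)⁻¹ / 2 * y ^ 2 - (x ^ 3)⁻¹ / 4 * (y ^ 4)⁻¹ + (x ^ 5)⁻¹ / 2 * (y ^ 2)⁻¹
      with hGdef
    have hderiv : ∀ y ∈ Set.uIcc a x, HasDerivAt G (f (x, y)) y := by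
      intro y hy
      rw [Set.uIcc_of_le hax.le] at hy
      have hy0 : 0 < y := lt_of_lt_of_le ha0 hy.1
      have h1 : HasDerivAt (fun y : ℝ => y ^ 2) (2 * y) y := by
        simpa using hasDerivAt_pow 2 y
      have h2 : HasDerivAt (fun y : ℝ => y ^ 4) (4 * y ^ 3) y := by
        simpa using hasDerivAt_pow 4 y
      have h3 : HasDerivAt (fun y : ℝ => (y ^ 2)⁻¹) (-(2 * y) / (y ^ 2) ^ 2) y :=
        h1.inv (pow_ne_zero 2 hy0.ne')
      have h4 : HasDerivAt (fun y : ℝ => (y ^ 4)⁻¹) (-(4 * y ^ 3) / (y ^ 4) ^ 2) y :=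
        h2.inv (pow_ne_zero 4 hy0.ne')
      have hG : HasDerivAt G
          (x ^ 3 / 2 * (2 * y) - x / 4 * (4 * y ^ 3) + x / 2 * (-(2 * y) / (y ^ 2) ^ 2)
            + (x ^ 3)⁻¹ / 2 * (2 * y) - (x ^ 3)⁻¹ / 4 * (-(4 * y ^ 3) / (y ^ 4) ^ 2)
            + (x ^ 5)⁻¹ / 2 * (-(2 * y) / (y ^ 2) ^ 2)) y := by
        exact (((((h1.const_mul (x ^ 3 / 2)).sub (h2.const_mul (x / 4))).add
          (h3.const_mul (x / 2))).add (h1.const_mul ((x ^ 3)⁻¹ / 2))).sub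
          (h4.const_mul ((x ^ 3)⁻¹ / 4))).add (h3.const_mul ((x ^ 5)⁻¹ / 2))
      convert hG using 1
      simp only [hfdef]
      field_simp
      ring
    have hcont : ContinuousOn (fun y => f (x, y)) (Set.uIcc a x) := by
      rw [Set.uIcc_of_le hax.le]
      have hne : ∀ y ∈ Set.Icc a x, x * y ≠ 0 := by
        intro y hy
        have hy0 : 0 < y := lt_of_lt_of_le ha0 hy.1
        positivity
      simp only [hfdef]
      have hg : ContinuousOn (fun y : ℝ => (x * y)⁻¹) (Set.Icc a x) :=
        (continuous_const.mul continuous_id).continuousOn.inv₀ hne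
      refine hg.mul (ContinuousOn.mul (ContinuousOn.mul ?_ ?_) ?_)
      · exact (continuous_const.sub (continuous_pow 2)).continuousOn
      · exact continuousOn_const.sub (hg.pow 2)
      · exact (continuous_pow 2).continuousOn.sub (hg.pow 2)
    have key : (∫ y in a..x, f (x, y)) = G x - G a :=
      intervalIntegral.integral_eq_sub_of_hasDerivAt hderiv hcont.intervalIntegrable
    rw [← integral_Ioc_eq_integral_Ioo, ← intervalIntegral.integral_of_le hax.le, key]
    have ha4 : a ^ 4 = (x⁻¹) ^ 2 := by
      rw [show (4:ℕ) = 2 * 2 from rfl, pow_mul, ha2]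
    simp only [hGdef]
    rw [ha2, ha4]
    field_simp
    ring
  -- main chain
  calc (∫ p in S, f p) = ∫ p, S.indicator f p := (integral_indicator hSm).symm
    _ = ∫ x, ∫ y, S.indicator f (x, y) := by
        rw [MeasureTheory.Measure.volume_eq_prod ℝ ℝ]
        exact MeasureTheory.integral_prod _
          (by rw [integrable_indicator_iff hSm,
                ← MeasureTheory.Measure.volume_eq_prod ℝ ℝ]; exact hInt)
    _ = ∫ x, (Set.Ioo (1:ℝ) R).indicator
          (fun x => ∫ y in Set.Ioo (Real.sqrt x)⁻¹ x, f (x, y)) x := by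
        refine integral_congr_ae (Filter.Eventually.of_forall fun x => ?_)
        beta_reduce
        by_cases hx : x ∈ Set.Ioo (1:ℝ) R
        · have h1 : (∫ y, S.indicator f (x, y)) =
              ∫ y, (Set.Ioo (Real.sqrt x)⁻¹ x).indicator (fun y => f (x, y)) y := by
            refine integral_congr_ae (Filter.Eventually.of_forall fun y => ?_)
            beta_reduce
            by_cases hy : y ∈ Set.Ioo (Real.sqrt x)⁻¹ x
            · rw [Set.indicator_of_mem hy,
                Set.indicator_of_mem (((hmem (x, y)).2 ⟨hx, hy⟩))]
            · rw [Set.indicator_of_notMem hy, Set.indicator_of_notMem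
                (fun hmemS => hy ((hmem (x, y)).1 hmemS).2)]
          rw [h1, integral_indicator measurableSet_Ioo, Set.indicator_of_mem hx]
        · have : ∀ y : ℝ, S.indicator f (x, y) = 0 := by
            intro y
            apply Set.indicator_of_notMem
            intro hmemS
            exact hx ((hmem (x, y)).1 hmemS).1
          simp only [this, integral_zero, Set.indicator_of_notMem hx]
    _ = ∫ x in Set.Ioo (1:ℝ) R, ∫ y in Set.Ioo (Real.sqrt x)⁻¹ x, f (x, y) :=
        integral_indicator measurableSet_Ioo
    _ = ∫ x in Set.Ioo (1:ℝ) R,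
          (x ^ 5 / 4 - x ^ 2 + 3 / 2 * x⁻¹ - (x ^ 4)⁻¹ + (x ^ 7)⁻¹ / 4) :=
        setIntegral_congr_fun measurableSet_Ioo hFval
    _ = (1 / 24) * (R ^ 6 - (R ^ 6)⁻¹) - (1 / 3) * (R ^ 3 - (R ^ 3)⁻¹) +
        (3 / 2) * Real.log R := by
        rw [← integral_Ioc_eq_integral_Ioo, ← intervalIntegral.integral_of_le hR.le]
        set H : ℝ → ℝ := fun x => x ^ 6 / 24 - x ^ 3 / 3 + 3 / 2 * Real.log x
            + (x ^ 3)⁻¹ / 3 - (x ^ 6)⁻¹ / 24 with hHdef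
        have hderiv : ∀ x ∈ Set.uIcc (1:ℝ) R, HasDerivAt H
            (x ^ 5 / 4 - x ^ 2 + 3 / 2 * x⁻¹ - (x ^ 4)⁻¹ + (x ^ 7)⁻¹ / 4) x := by
          intro x hx
          rw [Set.uIcc_of_le hR.le] at hx
          have hx0 : 0 < x := lt_of_lt_of_le one_pos hx.1
          have h3 : HasDerivAt (fun x : ℝ => x ^ 3) (3 * x ^ 2) x := by
            simpa using hasDerivAt_pow 3 x
          have h6 : HasDerivAt (fun x : ℝ => x ^ 6) (6 * x ^ 5) x := by
            simpa using hasDerivAt_pow 6 x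
          have h3i : HasDerivAt (fun x : ℝ => (x ^ 3)⁻¹) (-(3 * x ^ 2) / (x ^ 3) ^ 2) x :=
            h3.inv (pow_ne_zero 3 hx0.ne')
          have h6i : HasDerivAt (fun x : ℝ => (x ^ 6)⁻¹) (-(6 * x ^ 5) / (x ^ 6) ^ 2) x :=
            h6.inv (pow_ne_zero 6 hx0.ne')
          have hlog : HasDerivAt Real.log x⁻¹ x := Real.hasDerivAt_log hx0.ne'
          have hH : HasDerivAt H
              (6 * x ^ 5 / 24 - 3 * x ^ 2 / 3 + 3 / 2 * x⁻¹
                + (-(3 * x ^ 2) / (x ^ 3) ^ 2) / 3 - (-(6 * x ^ 5) / (x ^ 6) ^ 2) / 24) x := by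
            exact ((((h6.div_const 24).sub (h3.div_const 3)).add
              (hlog.const_mul (3 / 2))).add (h3i.div_const 3)).sub (h6i.div_const 24)
          convert hH using 1
          field_simp
          ring
        have hcont : ContinuousOn
            (fun x : ℝ => x ^ 5 / 4 - x ^ 2 + 3 / 2 * x⁻¹ - (x ^ 4)⁻¹ + (x ^ 7)⁻¹ / 4)
            (Set.uIcc (1:ℝ) R) := by
          rw [Set.uIcc_of_le hR.le]
          have hne : ∀ x ∈ Set.Icc (1:ℝ) R, x ≠ 0 := fun x hx =>
            (lt_of_lt_of_le one_pos hx.1).ne'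
          refine ContinuousOn.add (ContinuousOn.sub (ContinuousOn.add (ContinuousOn.sub
            ?_ ?_) ?_) ?_) ?_
          · exact ((continuous_id.pow 5).div_const 4).continuousOn
          · exact (continuous_id.pow 2).continuousOn
          · exact continuousOn_const.mul (continuous_id.continuousOn.inv₀ hne)
          · exact (continuous_id.pow 4).continuousOn.inv₀
              (fun x hx => pow_ne_zero 4 (hne x hx))
          · exact ((continuous_id.pow 7).continuousOn.inv₀
              (fun x hx => pow_ne_zero 7 (hne x hx))).div_const 4
        rw [intervalIntegral.integral_eq_sub_of_hasDerivAt hderiv hcont.intervalIntegrable]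
        simp only [hHdef]
        rw [Real.log_one]
        ring
end

section
/- The integral over (0,1) of the function s ↦ ⌊1/s⌋ · s (with ⌊·⌋ the floor function) equals π²/12: ∫₀¹ ⌊1/s⌋ s ds = π²/12. -/
open MeasureTheory Real Set Filter Topology

/-! On `(1/(n+2), 1/(n+1)]` the integrand is `(n+1) s`, so this piece contributes
`(1/(n+1) - 1/(n+2) + 1/(n+2)^2) / 2`. Summing over `n`, the first two terms telescope to `1`
and the last one gives `ζ(2) - 1`, so the integral is `ζ(2)/2 = π^2/12`. -/

theorem Antitone.hasSum_sub_succ {f : ℕ → ℝ} {l : ℝ} (hf : Antitone f)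
    (hl : Tendsto f atTop (𝓝 l)) : HasSum (fun n ↦ f n - f (n + 1)) (f 0 - l) := by
  rw [hasSum_iff_tendsto_nat_of_nonneg fun n ↦ sub_nonneg.2 (hf n.le_succ)]
  simp only [Finset.sum_range_sub']
  exact tendsto_const_nhds.sub hl

theorem hasSum_inv_add_two_sq : HasSum (fun n : ℕ ↦ ((n + 2 : ℝ) ^ 2)⁻¹) (π ^ 2 / 6 - 1) := by
  have h := (hasSum_nat_add_iff' 2).mpr hasSum_zeta_two
  norm_num [Finset.sum_range_succ] at h
  simpa [add_assoc, one_add_one_eq_two] using h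

theorem antitone_inv_add_one : Antitone fun n : ℕ ↦ (n + 1 : ℝ)⁻¹ := fun m n h ↦ by
  dsimp only
  gcongr

theorem floor_inv_eq_of_mem_Ioc {n : ℕ} {s : ℝ} (hs : s ∈ Ioc ((n + 2 : ℝ)⁻¹) ((n + 1 : ℝ)⁻¹)) :
    ⌊s⁻¹⌋ = n + 1 := by
  have hs₀ : 0 < s := (inv_pos.2 (by positivity)).trans hs.1
  rw [Int.floor_eq_iff]
  push_cast
  exact ⟨(le_inv_comm₀ hs₀ (by positivity)).1 hs.2,
    by linarith [(inv_lt_comm₀ (by positivity : (0 : ℝ) < n + 2) hs₀).1 hs.1]⟩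

theorem iUnion_Ioc_inv_add_two_inv_add_one :
    ⋃ n : ℕ, Ioc ((n + 2 : ℝ)⁻¹) ((n + 1 : ℝ)⁻¹) = Ioc 0 1 := by
  ext s
  simp only [mem_iUnion]
  constructor
  · rintro ⟨n, hs⟩
    exact ⟨(inv_pos.2 (by positivity)).trans hs.1, hs.2.trans (inv_le_one_of_one_le₀ (by simp))⟩
  · rintro ⟨hs₀, hs₁⟩
    have hfloor_pos : 0 < ⌊s⁻¹⌋₊ := Nat.floor_pos.2 (one_le_inv_iff₀.2 ⟨hs₀, hs₁⟩)
    obtain ⟨n, hn⟩ := Nat.exists_eq_add_one_of_ne_zero hfloor_pos.ne'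
    have h₁ := hn ▸ Nat.floor_le (inv_nonneg.2 hs₀.le)
    have h₂ := hn ▸ Nat.lt_floor_add_one s⁻¹
    push_cast at h₁ h₂
    refine ⟨n, (inv_lt_comm₀ (by positivity) hs₀).2 ?_, (le_inv_comm₀ hs₀ (by positivity)).2 h₁⟩
    linarith

theorem pairwise_disjoint_Ioc_inv_add_two_inv_add_one :
    Pairwise (Function.onFun Disjoint fun n : ℕ ↦ Ioc ((n + 2 : ℝ)⁻¹) ((n + 1 : ℝ)⁻¹)) := by
  simpa [Order.succ_eq_add_one, add_assoc, one_add_one_eq_two] using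
    antitone_inv_add_one.pairwise_disjoint_on_Ioc_succ

theorem abs_floor_inv_mul_self_le_one {s : ℝ} (hs : 0 ≤ s) : |⌊s⁻¹⌋ * s| ≤ 1 := by
  have h₀ : (0 : ℝ) ≤ ⌊s⁻¹⌋ := by exact_mod_cast Int.floor_nonneg.2 (inv_nonneg.2 hs)
  rw [abs_of_nonneg (by positivity)]
  calc (⌊s⁻¹⌋ : ℝ) * s ≤ s⁻¹ * s := by gcongr; exact Int.floor_le _
    _ ≤ 1 := inv_mul_le_one

theorem integral_floor_inv_mul_self_Ioc (n : ℕ) :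
    ∫ s in Ioc ((n + 2 : ℝ)⁻¹) ((n + 1 : ℝ)⁻¹), (⌊s⁻¹⌋ : ℝ) * s
      = ((n + 1 : ℝ)⁻¹ - (n + 2 : ℝ)⁻¹ + ((n + 2 : ℝ) ^ 2)⁻¹) / 2 := by
  have hfloor : EqOn (fun s : ℝ ↦ (⌊s⁻¹⌋ : ℝ) * s) (fun s ↦ (n + 1 : ℝ) * s)
      (Ioc ((n + 2 : ℝ)⁻¹) ((n + 1 : ℝ)⁻¹)) := fun s hs ↦ by
    simp only [floor_inv_eq_of_mem_Ioc hs]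
    push_cast
    rfl
  rw [setIntegral_congr_fun measurableSet_Ioc hfloor, ← intervalIntegral.integral_of_le
    (by gcongr; norm_num), intervalIntegral.integral_const_mul, integral_id]
  field_simp
  ring

theorem hasSum_integral_floor_inv_mul_self_Ioc :
    HasSum (fun n : ℕ ↦ ∫ s in Ioc ((n + 2 : ℝ)⁻¹) ((n + 1 : ℝ)⁻¹), (⌊s⁻¹⌋ : ℝ) * s)
      (π ^ 2 / 12) := by
  simp only [integral_floor_inv_mul_self_Ioc]
  have hlim : Tendsto (fun n : ℕ ↦ ((n + 1 : ℝ)⁻¹)) atTop (𝓝 0) := by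
    simpa using tendsto_one_div_add_atTop_nhds_zero_nat (𝕜 := ℝ)
  have h := (antitone_inv_add_one.hasSum_sub_succ hlim).add hasSum_inv_add_two_sq
  norm_num [add_assoc, one_add_one_eq_two] at h
  have := h.div_const 2
  rwa [div_div, show (6 : ℝ) * 2 = 12 by norm_num] at this

theorem integrableOn_floor_inv_mul_self_Ioc_zero_one :
    IntegrableOn (fun s : ℝ ↦ (⌊s⁻¹⌋ : ℝ) * s) (Ioc 0 1) := by
  have hmeas : Measurable fun s : ℝ ↦ (⌊s⁻¹⌋ : ℝ) * s := by fun_prop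
  refine Measure.integrableOn_of_bounded (M := 1) measure_Ioc_lt_top.ne
    hmeas.aestronglyMeasurable ((ae_restrict_iff' measurableSet_Ioc).2 (ae_of_all _ ?_))
  exact fun s hs ↦ abs_floor_inv_mul_self_le_one hs.1.le

theorem stmt18 : ∫ s in (0 : ℝ)..1, (⌊s⁻¹⌋ : ℝ) * s = π ^ 2 / 12 := by
  rw [intervalIntegral.integral_of_le zero_le_one, ← iUnion_Ioc_inv_add_two_inv_add_one]
  have h := hasSum_integral_iUnion (fun _ ↦ measurableSet_Ioc)
    pairwise_disjoint_Ioc_inv_add_two_inv_add_one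
    (iUnion_Ioc_inv_add_two_inv_add_one ▸ integrableOn_floor_inv_mul_self_Ioc_zero_one)
  exact h.unique hasSum_integral_floor_inv_mul_self_Ioc
end
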